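/- (Corollary 2, Unique value) Assume β_pl > 0 and β_op ≠ 0. If V_pl* : S → ℝ satisfies B_pl V_pl* = V_pl* and V_op* : S → ℝ satisfies B_op V_op* = V_op*, then V_pl*(s) = V_op*(s) for all s ∈ S; i.e., the player's and opponent's soft values coincide, so the two-player soft Q-learning game has a unique value. -/

import Mathlib

noncomputable section

/-- The probability simplex over a finite type `X`. -/
def simplex (X : Type*) [Fintype X] : Set (X → ℝ) :=
  {p | (∀ x, 0 ≤ p x) ∧ ∑ x, p x = 1}

variable {S A B : Type*} [Fintype S] [Fintype A] [Fintype B]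

/-- The free energy `f(π, σ, s, V)` of the two-player soft stochastic game: expected
one-step reward plus discounted continuation value, minus the information costs of the
player's policy `π` and the opponent's policy `σ` (convention `0·log 0 = 0` holds since
`Real.log 0 = 0`). -/
def freeEnergy (R : S → A → B → ℝ) (T : S → A → B → S → ℝ) (γ : ℝ)
    (ρpl : S → A → ℝ) (ρop : S → B → ℝ) (βpl βop : ℝ)
    (π : A → ℝ) (σ : B → ℝ) (s : S) (V : S → ℝ) : ℝ :=
  (∑ a, ∑ b, π a * σ b * (R s a b + γ * ∑ s', T s a b s' * V s'))
    - (1 / βpl) * ∑ a, π a * Real.log (π a / ρpl s a)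
    - (1 / βop) * ∑ b, σ b * Real.log (σ b / ρop s b)

/-- The extremum operator over the opponent's simplex: a supremum if `β_op > 0`
and an infimum if `β_op < 0`. -/
def extOp (βop : ℝ) (g : (B → ℝ) → ℝ) : ℝ :=
  if 0 < βop then sSup (g '' simplex B) else sInf (g '' simplex B)

/-- The player's soft Bellman operator `(B_pl V)(s) = sup_π ext_σ f(π, σ, s, V)`. -/
def Bpl (R : S → A → B → ℝ) (T : S → A → B → S → ℝ) (γ : ℝ)
    (ρpl : S → A → ℝ) (ρop : S → B → ℝ) (βpl βop : ℝ) (V : S → ℝ) (s : S) : ℝ :=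
  sSup ((fun π => extOp βop (fun σ => freeEnergy R T γ ρpl ρop βpl βop π σ s V)) '' simplex A)

/-- The opponent's soft Bellman operator `(B_op V)(s) = ext_σ sup_π f(π, σ, s, V)`. -/
def Bop (R : S → A → B → ℝ) (T : S → A → B → S → ℝ) (γ : ℝ)
    (ρpl : S → A → ℝ) (ρop : S → B → ℝ) (βpl βop : ℝ) (V : S → ℝ) (s : S) : ℝ :=
  extOp βop (fun σ => sSup ((fun π => freeEnergy R T γ ρpl ρop βpl βop π σ s V) '' simplex A))

/-!
For `β_op > 0` both operators take iterated suprema of the free energy, which is continuous on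
the compact product of simplices, so the order of the suprema does not matter. For `β_op ≤ 0`
the free energy is concave in the player's policy and convex in the opponent's (the relative
entropy terms are convex), so Sion's minimax theorem yields a saddle point and again
`B_pl V = B_op V`. Finally `B_pl` is a `γ`-contraction for the sup distance on `S → ℝ`, and both
`V_pl*` and `V_op*` are fixed points of it.
-/

section Saddle

variable {E F β : Type*} [ConditionallyCompleteLattice β] {X : Set E} {Y : Set F}
  {f : E → F → β} {a : E} {b : F}

theorem IsSaddlePointOn.isLeast_sSup (h : IsSaddlePointOn X Y f a b) (ha : a ∈ X) (hb : b ∈ Y)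
    (hbdd : ∀ x ∈ X, BddAbove (f x '' Y)) :
    IsLeast ((fun x => sSup (f x '' Y)) '' X) (f a b) := by
  have hmax : IsGreatest (f a '' Y) (f a b) :=
    ⟨⟨b, hb, rfl⟩, by rintro _ ⟨y, hy, rfl⟩; exact h a ha y hy⟩
  refine ⟨⟨a, ha, hmax.csSup_eq⟩, ?_⟩
  rintro _ ⟨x, hx, rfl⟩
  exact (h x hx b hb).trans (le_csSup (hbdd x hx) ⟨b, hb, rfl⟩)

theorem IsSaddlePointOn.isGreatest_sInf (h : IsSaddlePointOn X Y f a b) (ha : a ∈ X)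
    (hb : b ∈ Y) (hbdd : ∀ y ∈ Y, BddBelow ((f · y) '' X)) :
    IsGreatest ((fun y => sInf ((f · y) '' X)) '' Y) (f a b) := by
  have hmin : IsLeast ((f · b) '' X) (f a b) :=
    ⟨⟨a, ha, rfl⟩, by rintro _ ⟨x, hx, rfl⟩; exact h x hx b hb⟩
  refine ⟨⟨b, hb, hmin.csInf_eq⟩, ?_⟩
  rintro _ ⟨y, hy, rfl⟩
  exact (csInf_le (hbdd y hy) ⟨a, ha, rfl⟩).trans (h a ha y hy)

theorem isGreatest_sSup_image_of_forall_le (ha : a ∈ X) (hb : b ∈ Y)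
    (h : ∀ x ∈ X, ∀ y ∈ Y, f x y ≤ f a b) :
    IsGreatest ((fun x => sSup (f x '' Y)) '' X) (f a b) := by
  have hmax : IsGreatest (f a '' Y) (f a b) :=
    ⟨⟨b, hb, rfl⟩, by rintro _ ⟨y, hy, rfl⟩; exact h a ha y hy⟩
  refine ⟨⟨a, ha, hmax.csSup_eq⟩, ?_⟩
  rintro _ ⟨x, hx, rfl⟩
  exact csSup_le ⟨f x b, b, hb, rfl⟩ (by rintro _ ⟨y, hy, rfl⟩; exact h x hx y hy)

end Saddle

theorem Real.continuous_mul_log_div (c : ℝ) : Continuous fun x => x * log (x / c) := by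
  rcases eq_or_ne c 0 with rfl | hc
  · simpa using continuous_const
  have : (fun x => x * log (x / c)) = fun x => x * log x - log c * x := by
    ext x
    rcases eq_or_ne x 0 with rfl | hx
    · simp
    · rw [log_div hx hc]; ring
  rw [this]
  fun_prop

@[fun_prop]
theorem Continuous.mul_log_div {α : Type*} [TopologicalSpace α] {f : α → ℝ} (hf : Continuous f)
    (c : ℝ) : Continuous fun x => f x * Real.log (f x / c) :=
  (Real.continuous_mul_log_div c).comp hf

theorem Real.convexOn_mul_log_div (c : ℝ) : ConvexOn ℝ (Set.Ici 0) fun x => x * log (x / c) := by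
  rcases eq_or_ne c 0 with rfl | hc
  · simpa using convexOn_const 0 (convex_Ici 0)
  have : (fun x => x * log (x / c)) = fun x => x * log x + (-log c) * x := by
    ext x
    rcases eq_or_ne x 0 with rfl | hx
    · simp
    · rw [log_div hx hc]; ring
  rw [this]
  exact convexOn_mul_log.add ((LinearMap.mulLeft ℝ (-log c)).convexOn (convex_Ici 0))

theorem convex_simplex (X : Type*) [Fintype X] : Convex ℝ (simplex X) :=
  convex_stdSimplex ℝ X

theorem isCompact_simplex (X : Type*) [Fintype X] : IsCompact (simplex X) :=
  isCompact_stdSimplex ℝ X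

theorem simplex_nonempty (X : Type*) [Fintype X] [Nonempty X] : (simplex X).Nonempty :=
  ⟨_, Subtype.property (Classical.arbitrary (stdSimplex ℝ X))⟩

section ImageBounds

variable {α : Type*} {s : Set α} {g h : α → ℝ} {ε : ℝ}

theorem csSup_image_le_csSup_image_add (hs : s.Nonempty) (hh : BddAbove (h '' s))
    (hgh : ∀ x ∈ s, g x ≤ h x + ε) : sSup (g '' s) ≤ sSup (h '' s) + ε :=
  csSup_le (hs.image g) <| by
    rintro _ ⟨x, hx, rfl⟩
    exact (hgh x hx).trans (add_le_add_left (le_csSup hh ⟨x, hx, rfl⟩) ε)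

theorem csInf_image_le_csInf_image_add (hs : s.Nonempty) (hg : BddBelow (g '' s))
    (hgh : ∀ x ∈ s, g x ≤ h x + ε) : sInf (g '' s) ≤ sInf (h '' s) + ε := by
  rw [← sub_le_iff_le_add]
  refine le_csInf (hs.image h) ?_
  rintro _ ⟨x, hx, rfl⟩
  rw [sub_le_iff_le_add]
  exact (csInf_le hg ⟨x, hx, rfl⟩).trans (hgh x hx)

end ImageBounds

theorem extOp_le_extOp_add [Nonempty B] {βop ε : ℝ} {g h : (B → ℝ) → ℝ}
    (hg : BddBelow (g '' simplex B)) (hh : BddAbove (h '' simplex B))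
    (hgh : ∀ σ ∈ simplex B, g σ ≤ h σ + ε) : extOp βop g ≤ extOp βop h + ε := by
  unfold extOp
  split_ifs
  · exact csSup_image_le_csSup_image_add (simplex_nonempty B) hh hgh
  · exact csInf_image_le_csInf_image_add (simplex_nonempty B) hg hgh

theorem convexOn_sum_mul_log_div {X : Type*} [Fintype X] (ρ : X → ℝ) :
    ConvexOn ℝ (simplex X) fun p => ∑ x, p x * Real.log (p x / ρ x) := by
  refine ⟨convex_simplex X, fun p hp q hq a b ha hb hab => ?_⟩
  simp only [smul_eq_mul, Finset.mul_sum, ← Finset.sum_add_distrib, Pi.add_apply, Pi.smul_apply]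
  exact Finset.sum_le_sum fun x _ => (Real.convexOn_mul_log_div (ρ x)).2 (hp.1 x) (hq.1 x) ha hb hab

theorem sum_sum_smul_add_smul_mul {I J : Type*} [Fintype I] [Fintype J] (M : I → J → ℝ)
    (p q : I → ℝ) (σ : J → ℝ) (a b : ℝ) :
    ∑ i, ∑ j, (a • p + b • q) i * σ j * M i j
      = a * ∑ i, ∑ j, p i * σ j * M i j + b * ∑ i, ∑ j, q i * σ j * M i j := by
  simp only [Finset.mul_sum, ← Finset.sum_add_distrib, Pi.add_apply, Pi.smul_apply, smul_eq_mul]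
  exact Finset.sum_congr rfl fun _ _ => Finset.sum_congr rfl fun _ _ => by ring

theorem sum_sum_mul_smul_add_smul {I J : Type*} [Fintype I] [Fintype J] (M : I → J → ℝ)
    (p : I → ℝ) (σ τ : J → ℝ) (a b : ℝ) :
    ∑ i, ∑ j, p i * (a • σ + b • τ) j * M i j
      = a * ∑ i, ∑ j, p i * σ j * M i j + b * ∑ i, ∑ j, p i * τ j * M i j := by
  simp only [Finset.mul_sum, ← Finset.sum_add_distrib, Pi.add_apply, Pi.smul_apply, smul_eq_mul]
  exact Finset.sum_congr rfl fun _ _ => Finset.sum_congr rfl fun _ _ => by ring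

section SoftGame

variable (R : S → A → B → ℝ) (T : S → A → B → S → ℝ) (γ : ℝ)
  (ρpl : S → A → ℝ) (ρop : S → B → ℝ) (βpl βop : ℝ)

theorem continuous_freeEnergy (s : S) (V : S → ℝ) :
    Continuous (Function.uncurry fun p σ => freeEnergy R T γ ρpl ρop βpl βop p σ s V) := by
  unfold freeEnergy Function.uncurry
  fun_prop

theorem concaveOn_freeEnergy_left (hβpl : 0 ≤ βpl) (σ : B → ℝ) (s : S) (V : S → ℝ) :
    ConcaveOn ℝ (simplex A) fun p => freeEnergy R T γ ρpl ρop βpl βop p σ s V := by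
  refine ⟨convex_simplex A, fun p hp q hq a b ha hb hab => ?_⟩
  have hkl := (convexOn_sum_mul_log_div (ρpl s)).2 hp hq ha hb hab
  have hc : 0 ≤ 1 / βpl := by positivity
  obtain rfl : b = 1 - a := by linarith
  simp only [smul_eq_mul] at hkl ⊢
  unfold freeEnergy
  rw [sum_sum_smul_add_smul_mul]
  linarith [mul_le_mul_of_nonneg_left hkl hc]

theorem convexOn_freeEnergy_right (hβop : βop ≤ 0) (p : A → ℝ) (s : S) (V : S → ℝ) :
    ConvexOn ℝ (simplex B) fun σ => freeEnergy R T γ ρpl ρop βpl βop p σ s V := by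
  refine ⟨convex_simplex B, fun σ hσ τ hτ a b ha hb hab => ?_⟩
  have hkl := (convexOn_sum_mul_log_div (ρop s)).2 hσ hτ ha hb hab
  have hc : 0 ≤ -(1 / βop) := by rw [neg_nonneg, one_div_nonpos]; exact hβop
  obtain rfl : b = 1 - a := by linarith
  simp only [smul_eq_mul] at hkl ⊢
  unfold freeEnergy
  rw [sum_sum_mul_smul_add_smul]
  linarith [mul_le_mul_of_nonneg_left hkl hc]

theorem freeEnergy_le_add (hγ : 0 ≤ γ) (hT0 : ∀ s a b s', 0 ≤ T s a b s')
    (hT1 : ∀ s a b, ∑ s', T s a b s' = 1) {V W : S → ℝ} {D : ℝ} (hVW : ∀ s', V s' ≤ W s' + D)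
    {p : A → ℝ} {σ : B → ℝ} (hp : p ∈ simplex A) (hσ : σ ∈ simplex B) (s : S) :
    freeEnergy R T γ ρpl ρop βpl βop p σ s V
      ≤ freeEnergy R T γ ρpl ρop βpl βop p σ s W + γ * D := by
  have hQ : ∀ a b, R s a b + γ * ∑ s', T s a b s' * V s'
      ≤ R s a b + γ * ∑ s', T s a b s' * W s' + γ * D := by
    intro a b
    have hE : ∑ s', T s a b s' * V s' ≤ ∑ s', T s a b s' * W s' + D :=
      calc ∑ s', T s a b s' * V s' ≤ ∑ s', T s a b s' * (W s' + D) :=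
            Finset.sum_le_sum fun s' _ => mul_le_mul_of_nonneg_left (hVW s') (hT0 s a b s')
        _ = ∑ s', T s a b s' * W s' + D := by
            simp only [mul_add, Finset.sum_add_distrib, ← Finset.sum_mul, hT1, one_mul]
    linarith [mul_le_mul_of_nonneg_left hE hγ]
  have hsum : ∑ a, ∑ b, p a * σ b * (R s a b + γ * ∑ s', T s a b s' * V s')
      ≤ ∑ a, ∑ b, p a * σ b * (R s a b + γ * ∑ s', T s a b s' * W s') + γ * D :=
    calc _ ≤ ∑ a, ∑ b, p a * σ b * (R s a b + γ * ∑ s', T s a b s' * W s' + γ * D) :=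
          Finset.sum_le_sum fun a _ => Finset.sum_le_sum fun b _ =>
            mul_le_mul_of_nonneg_left (hQ a b) (mul_nonneg (hp.1 a) (hσ.1 b))
      _ = _ := by
          simp only [mul_add, Finset.sum_add_distrib, ← Finset.sum_mul, ← Finset.sum_mul_sum,
            hp.2, hσ.2, one_mul]
  unfold freeEnergy
  linarith

theorem exists_isGreatest_extOp_freeEnergy [Nonempty A] [Nonempty B] (hβpl : 0 ≤ βpl)
    (V : S → ℝ) (s : S) :
    ∃ v, IsGreatest ((fun p => extOp βop fun σ => freeEnergy R T γ ρpl ρop βpl βop p σ s V) ''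
      simplex A) v ∧ Bop R T γ ρpl ρop βpl βop V s = v := by
  have hcont := continuous_freeEnergy R T γ ρpl ρop βpl βop s V
  set f := fun p σ => freeEnergy R T γ ρpl ρop βpl βop p σ s V
  have hcont_left (σ : B → ℝ) : Continuous fun p => f p σ := hcont.uncurry_right σ
  have hcont_right (p : A → ℝ) : Continuous fun σ => f p σ := hcont.uncurry_left p
  by_cases hβop : 0 < βop
  · obtain ⟨⟨p₀, σ₀⟩, ⟨hp₀, hσ₀⟩, hmax⟩ := ((isCompact_simplex A).prod (isCompact_simplex B))
      |>.exists_isMaxOn ((simplex_nonempty A).prod (simplex_nonempty B)) hcont.continuousOn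
    have hle (p) (hp : p ∈ simplex A) (σ) (hσ : σ ∈ simplex B) : f p σ ≤ f p₀ σ₀ :=
      isMaxOn_iff.mp hmax (p, σ) (Set.mk_mem_prod hp hσ)
    refine ⟨f p₀ σ₀, ?_, ?_⟩
    · simp only [extOp, if_pos hβop]
      exact isGreatest_sSup_image_of_forall_le hp₀ hσ₀ hle
    · simp only [Bop, extOp, if_pos hβop]
      exact (isGreatest_sSup_image_of_forall_le (f := fun σ p => f p σ) hσ₀ hp₀
        fun σ hσ p hp => hle p hp σ hσ).csSup_eq
  · obtain ⟨σ₀, hσ₀, p₀, hp₀, hsaddle⟩ := Sion.exists_isSaddlePointOn (f := fun σ p => f p σ)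
      (simplex_nonempty B) (convex_simplex B) (isCompact_simplex B)
      (fun p _ => (hcont_right p).continuousOn.lowerSemicontinuousOn)
      (fun p _ => (convexOn_freeEnergy_right R T γ ρpl ρop βpl βop (not_lt.1 hβop) p s V)
        |>.quasiconvexOn)
      (convex_simplex A) (simplex_nonempty A) (isCompact_simplex A)
      (fun σ _ => (hcont_left σ).continuousOn.upperSemicontinuousOn)
      (fun σ _ => (concaveOn_freeEnergy_left R T γ ρpl ρop βpl βop hβpl σ s V).quasiconcaveOn)
    refine ⟨f p₀ σ₀, ?_, ?_⟩
    · simp only [extOp, if_neg hβop]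
      exact hsaddle.isGreatest_sInf hσ₀ hp₀ fun p _ =>
        (isCompact_simplex B).bddBelow_image (hcont_right p).continuousOn
    · simp only [Bop, extOp, if_neg hβop]
      exact (hsaddle.isLeast_sSup hσ₀ hp₀ fun σ _ =>
        (isCompact_simplex A).bddAbove_image (hcont_left σ).continuousOn).csInf_eq

theorem Bpl_eq_Bop [Nonempty A] [Nonempty B] (hβpl : 0 ≤ βpl) (V : S → ℝ) (s : S) :
    Bpl R T γ ρpl ρop βpl βop V s = Bop R T γ ρpl ρop βpl βop V s := by
  obtain ⟨v, hv, hBop⟩ := exists_isGreatest_extOp_freeEnergy R T γ ρpl ρop βpl βop hβpl V s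
  exact hv.csSup_eq.trans hBop.symm

theorem Bpl_le_add [Nonempty A] [Nonempty B] (hβpl : 0 ≤ βpl) (hγ : 0 ≤ γ)
    (hT0 : ∀ s a b s', 0 ≤ T s a b s') (hT1 : ∀ s a b, ∑ s', T s a b s' = 1)
    {V W : S → ℝ} {D : ℝ} (hVW : ∀ s', V s' ≤ W s' + D) (s : S) :
    Bpl R T γ ρpl ρop βpl βop V s ≤ Bpl R T γ ρpl ρop βpl βop W s + γ * D := by
  obtain ⟨v, hv, -⟩ := exists_isGreatest_extOp_freeEnergy R T γ ρpl ρop βpl βop hβpl W s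
  refine csSup_image_le_csSup_image_add (simplex_nonempty A) hv.bddAbove fun p hp => ?_
  have hcont := continuous_freeEnergy R T γ ρpl ρop βpl βop s
  exact extOp_le_extOp_add
    ((isCompact_simplex B).bddBelow_image ((hcont V).uncurry_left p).continuousOn)
    ((isCompact_simplex B).bddAbove_image ((hcont W).uncurry_left p).continuousOn)
    fun σ hσ => freeEnergy_le_add R T γ ρpl ρop βpl βop hγ hT0 hT1 hVW hp hσ s

theorem contractingWith_Bpl [Nonempty A] [Nonempty B] (hβpl : 0 ≤ βpl) (hγ0 : 0 ≤ γ)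
    (hγ1 : γ < 1) (hT0 : ∀ s a b s', 0 ≤ T s a b s') (hT1 : ∀ s a b, ∑ s', T s a b s' = 1) :
    ContractingWith ⟨γ, hγ0⟩ (Bpl R T γ ρpl ρop βpl βop) := by
  refine ⟨hγ1, LipschitzWith.of_dist_le_mul fun V W => ?_⟩
  refine (dist_pi_le_iff (mul_nonneg hγ0 dist_nonneg)).2 fun s => ?_
  have hVW (s') : V s' ≤ W s' + dist V W := by
    linarith [(Real.sub_le_dist _ _).trans (dist_le_pi_dist V W s')]
  have hWV (s') : W s' ≤ V s' + dist V W := by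
    linarith [(Real.sub_le_dist _ _).trans (dist_le_pi_dist W V s'), dist_comm V W]
  rw [Real.dist_eq, abs_sub_le_iff]
  constructor
  · linarith [Bpl_le_add R T γ ρpl ρop βpl βop hβpl hγ0 hT0 hT1 hVW s]
  · linarith [Bpl_le_add R T γ ρpl ρop βpl βop hβpl hγ0 hT0 hT1 hWV s]

end SoftGame

theorem soft_game_unique_value_general [Nonempty A] [Nonempty B]
    (R : S → A → B → ℝ) (T : S → A → B → S → ℝ) (γ : ℝ) (hγ0 : 0 ≤ γ) (hγ1 : γ < 1)
    (hT0 : ∀ s a b s', 0 ≤ T s a b s') (hT1 : ∀ s a b, ∑ s', T s a b s' = 1)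
    (ρpl : S → A → ℝ) (ρop : S → B → ℝ)
    (βpl βop : ℝ) (hβpl : 0 < βpl)
    (Vpl Vop : S → ℝ)
    (hVpl : ∀ s, Bpl R T γ ρpl ρop βpl βop Vpl s = Vpl s)
    (hVop : ∀ s, Bop R T γ ρpl ρop βpl βop Vop s = Vop s) :
    ∀ s, Vpl s = Vop s := by
  have hVop_fixed : Function.IsFixedPt (Bpl R T γ ρpl ρop βpl βop) Vop :=
    funext fun s => (Bpl_eq_Bop R T γ ρpl ρop βpl βop hβpl.le Vop s).trans (hVop s)
  exact congrFun <| (contractingWith_Bpl R T γ ρpl ρop βpl βop hβpl.le hγ0 hγ1 hT0 hT1)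
    |>.fixedPoint_unique' (funext hVpl) hVop_fixed

/-- (Corollary 2, Unique value) For `β_pl > 0` and `β_op ≠ 0`, any fixed point of the
player's operator `B_pl` coincides with any fixed point of the opponent's operator `B_op`:
the two-player soft Q-learning game has a unique value. -/
theorem soft_game_unique_value [Nonempty S] [Nonempty A] [Nonempty B]
    (R : S → A → B → ℝ) (T : S → A → B → S → ℝ) (γ : ℝ) (hγ0 : 0 ≤ γ) (hγ1 : γ < 1)
    (hT0 : ∀ s a b s', 0 ≤ T s a b s') (hT1 : ∀ s a b, ∑ s', T s a b s' = 1)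
    (ρpl : S → A → ℝ) (ρop : S → B → ℝ)
    (hρpl : ∀ s a, 0 < ρpl s a) (hρpl1 : ∀ s, ∑ a, ρpl s a = 1)
    (hρop : ∀ s b, 0 < ρop s b) (hρop1 : ∀ s, ∑ b, ρop s b = 1)
    (βpl βop : ℝ) (hβpl : 0 < βpl) (hβop : βop ≠ 0)
    (Vpl Vop : S → ℝ)
    (hVpl : ∀ s, Bpl R T γ ρpl ρop βpl βop Vpl s = Vpl s)
    (hVop : ∀ s, Bop R T γ ρpl ρop βpl βop Vop s = Vop s) :
    ∀ s, Vpl s = Vop s :=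
  soft_game_unique_value_general R T γ hγ0 hγ1 hT0 hT1 ρpl ρop βpl βop hβpl Vpl Vop hVpl hVop
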